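/- arXiv:1204.5159 — 2 statements merged into one kernel-verified Lean document; each statement's English description precedes it below -/
import Mathlib

section
/- The Resolve rule of LKDPLL(T) is size-preserving invertible: if Δ ⊢ φ, l∨C is derivable in LKDPLL(T) and Δ,l is T-inconsistent, then Δ ⊢ φ, C is derivable with a derivation of size no larger. -/
variable {L M : Type} [DecidableEq L]

/-- `Δ ⊨_T l`: every T-model of `Δ` satisfies the literal `l`. -/
def entails (sat : M → L → Prop) (Δ : Finset L) (l : L) : Prop :=
  ∀ m, (∀ x ∈ Δ, sat m x) → sat m l

/-- `Δ ⊨_T ⊥`: `Δ` is T-inconsistent (has no T-model). -/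
def incon (sat : M → L → Prop) (Δ : Finset L) : Prop :=
  ∀ m, ¬ ∀ x ∈ Δ, sat m x

/-- Literals appearing in `φ` or whose negation appears in `φ`. -/
def atm (neg : L → L) (φ : Finset (Finset L)) : Set L :=
  {l | ∃ C ∈ φ, l ∈ C ∨ neg l ∈ C}

/-- `|φ|`: the sum of the cardinalities of the clauses of `φ`. -/
def clsSize (φ : Finset (Finset L)) : ℕ := ∑ C ∈ φ, C.card

/-- The system LKDPLL(T): `Der neg sat Δ φ n` means `Δ ⊢ φ` has a derivation of size `n`. -/
inductive Der (neg : L → L) (sat : M → L → Prop) :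
    Finset L → Finset (Finset L) → ℕ → Prop where
  | empty (Δ : Finset L) (φ : Finset (Finset L)) :
      Der neg sat Δ (insert ∅ φ) 1
  | split {Δ : Finset L} {φ : Finset (Finset L)} {n m : ℕ} (l : L) :
      Der neg sat (insert (neg l) Δ) φ n → Der neg sat (insert l Δ) φ m →
      l ∈ atm neg φ → ¬ incon sat (insert (neg l) Δ) → ¬ incon sat (insert l Δ) →
      Der neg sat Δ φ (n + m + 1)
  | assert {Δ : Finset L} {φ : Finset (Finset L)} {n : ℕ} (l : L) :
      Der neg sat (insert l Δ) (insert {l} φ) n →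
      ¬ incon sat (insert (neg l) Δ) → ¬ incon sat (insert l Δ) →
      Der neg sat Δ (insert {l} φ) (n + 1)
  | subsume {Δ : Finset L} {φ : Finset (Finset L)} {n : ℕ} (l : L) (C : Finset L) :
      Der neg sat Δ φ n → incon sat (insert (neg l) Δ) →
      Der neg sat Δ (insert (insert l C) φ) (n + 1)
  | resolve {Δ : Finset L} {φ : Finset (Finset L)} {n : ℕ} (l : L) (C : Finset L) :
      Der neg sat Δ (insert C φ) n → incon sat (insert l Δ) →
      Der neg sat Δ (insert (insert l C) φ) (n + 1)

/-!
Induct on the derivation of `Δ ⊢ ψ`, with the target generalised to any clause set `ψ'` that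
contains every clause of `ψ`, either unchanged or with `l` deleted. Since `Δ, l` stays
T-inconsistent as `Δ` grows, while Split and Assert on `a` need `Δ, a` (and `Δ, ¬a`) consistent,
such steps never touch `l` and transfer verbatim. A Subsume step is simply dropped, and a Resolve
step is either dropped (when it removes `l` itself) or replayed on the clause with `l` deleted.
Extra clauses in `ψ'` never hurt, so no step grows the size.
-/

variable {neg : L → L} {sat : M → L → Prop}

theorem incon.insert_insert {Δ : Finset L} {l : L} (h : incon sat (insert l Δ)) (a : L) :
    incon sat (insert l (insert a Δ)) :=
  fun m hm => h m fun x hx => hm x (Finset.insert_subset_insert l (Finset.subset_insert a Δ) hx)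

theorem mem_atm_of_forall_erase_mem {ψ ψ' : Finset (Finset L)} {l a : L}
    (ha : a ∈ atm neg ψ) (hal : a ≠ l) (hnal : neg a ≠ l)
    (hψ : ∀ D ∈ ψ, D.erase l ∈ ψ' ∨ D ∈ ψ') : a ∈ atm neg ψ' := by
  obtain ⟨D, hD, haD⟩ := ha
  rcases hψ D hD with hD' | hD'
  · exact ⟨D.erase l, hD', by simpa [Finset.mem_erase, hal, hnal] using haD⟩
  · exact ⟨D, hD', haD⟩

theorem Der.of_empty_mem {Δ : Finset L} {ψ : Finset (Finset L)} (h : ∅ ∈ ψ) :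
    Der neg sat Δ ψ 1 := by
  simpa [Finset.insert_erase h] using Der.empty (neg := neg) (sat := sat) Δ (ψ.erase ∅)

theorem Der.resolve_of_mem {Δ E : Finset L} {ψ : Finset (Finset L)} {n : ℕ} {a : L}
    (h : Der neg sat Δ (insert E ψ) n) (ha : incon sat (insert a Δ)) (hE : insert a E ∈ ψ) :
    Der neg sat Δ ψ (n + 1) := by
  simpa [Finset.insert_eq_of_mem hE] using Der.resolve a E h ha

theorem Der.exists_le_of_forall_erase_mem {Δ : Finset L} {ψ : Finset (Finset L)} {n : ℕ}
    (h : Der neg sat Δ ψ n) {l : L} (hl : incon sat (insert l Δ)) {ψ' : Finset (Finset L)}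
    (hψ : ∀ D ∈ ψ, D.erase l ∈ ψ' ∨ D ∈ ψ') : ∃ m ≤ n, Der neg sat Δ ψ' m := by
  induction h generalizing ψ' with
  | empty Δ φ =>
    refine ⟨1, le_rfl, Der.of_empty_mem ?_⟩
    simpa using hψ ∅ (Finset.mem_insert_self _ _)
  | split a _ _ ha hc₁ hc₂ ih₁ ih₂ =>
    have hal : a ≠ l := fun he => hc₂ (he ▸ hl)
    have hnal : neg a ≠ l := fun he => hc₁ (he ▸ hl)
    obtain ⟨m₁, hm₁, d₁⟩ := ih₁ (hl.insert_insert _) hψ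
    obtain ⟨m₂, hm₂, d₂⟩ := ih₂ (hl.insert_insert _) hψ
    exact ⟨m₁ + m₂ + 1, by omega,
      Der.split a d₁ d₂ (mem_atm_of_forall_erase_mem ha hal hnal hψ) hc₁ hc₂⟩
  | assert a _ hc₁ hc₂ ih =>
    have hal : a ≠ l := fun he => hc₂ (he ▸ hl)
    have ha : {a} ∈ ψ' := by
      simpa [Finset.erase_eq_of_notMem, Ne.symm hal] using hψ {a} (Finset.mem_insert_self _ _)
    obtain ⟨m, hm, d⟩ := ih (hl.insert_insert a) hψ
    rw [← Finset.insert_eq_of_mem ha] at d ⊢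
    exact ⟨m + 1, by omega, Der.assert a d hc₁ hc₂⟩
  | subsume a D _ _ ih =>
    obtain ⟨m, hm, d⟩ := ih hl fun E hE => hψ E (Finset.mem_insert_of_mem hE)
    exact ⟨m, by omega, d⟩
  | @resolve Δ φ n a D _ hinc ih =>
    have hφ : ∀ E ∈ φ, E.erase l ∈ ψ' ∨ E ∈ ψ' := fun E hE => hψ E (Finset.mem_insert_of_mem hE)
    have resolve_into (E : Finset L) (hDE : D.erase l = E ∨ D = E) (hE : insert a E ∈ ψ') :
        ∃ m ≤ n + 1, Der neg sat Δ ψ' m := by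
      obtain ⟨m, hm, d⟩ := ih hl (ψ' := insert E ψ') fun F hF => by
        rcases Finset.mem_insert.1 hF with rfl | hF
        · rcases hDE with rfl | rfl <;> simp
        · exact (hφ F hF).imp Finset.mem_insert_of_mem Finset.mem_insert_of_mem
      exact ⟨m + 1, by omega, d.resolve_of_mem hinc hE⟩
    rcases hψ _ (Finset.mem_insert_self _ _) with hD | hD
    · by_cases hal : a = l
      · subst hal
        obtain ⟨m, hm, d⟩ := ih hl fun F hF => by
          rcases Finset.mem_insert.1 hF with rfl | hF
          · simpa using Or.inl hD
          · exact hφ F hF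
        exact ⟨m, by omega, d⟩
      · exact resolve_into _ (Or.inl rfl) (by rwa [Finset.erase_insert_of_ne hal] at hD)
    · exact resolve_into D (Or.inr rfl) hD

/-- Size-preserving invertibility of the Resolve rule. -/
theorem resolve_invertible (neg : L → L) (sat : M → L → Prop)
    (Δ : Finset L) (φ : Finset (Finset L)) (l : L) (C : Finset L) (n : ℕ)
    (h : Der neg sat Δ (insert (insert l C) φ) n)
    (hl : incon sat (insert l Δ)) :
    ∃ m ≤ n, Der neg sat Δ (insert C φ) m := by
  refine h.exists_le_of_forall_erase_mem hl fun D hD => ?_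
  rcases Finset.mem_insert.1 hD with rfl | hD
  · by_cases hlC : l ∈ C
    · simp [Finset.insert_eq_of_mem hlC]
    · simp [Finset.erase_insert hlC]
  · exact Or.inr (Finset.mem_insert_of_mem hD)
end

section
/- Simulation of the Resolve rule of LKDPLL(T) in LK(T)p: if the LK(T)p sequent Γ = (Δ, φ', C') ⊢ [P] corresponds to the LKDPLL(T) sequent Δ ⊢ φ, l∨C (where C' P-corresponds to l∨C) and Δ,l is T-inconsistent, then the sequent (Δ, φ', C') ⊢ [P ∪ {¬l}] (obtained by one polarity-extension inference) corresponds to Δ ⊢ φ, C. -/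
variable {L M : Type} [DecidableEq L]

/-- Formulae of LK(T)p: literals and the four polarised connectives. -/
inductive Fm (L : Type) where
  | lit : L → Fm L
  | andP : Fm L → Fm L → Fm L
  | orP : Fm L → Fm L → Fm L
  | andN : Fm L → Fm L → Fm L
  | orN : Fm L → Fm L → Fm L

/-- Negation on LK(T)p formulae, extending the negation `neg` on literals. -/
def Fm.negF (neg : L → L) : Fm L → Fm L
  | .lit l => .lit (neg l)
  | .andP A B => .orN (A.negF neg) (B.negF neg)
  | .orP A B => .andN (A.negF neg) (B.negF neg)
  | .andN A B => .orP (A.negF neg) (B.negF neg)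
  | .orN A B => .andP (A.negF neg) (B.negF neg)

/-- `IsNegDisj C' ls`: `C'` is a negative disjunction (`∨⁻`-tree) of the literals `ls`. -/
inductive IsNegDisj : Fm L → List L → Prop where
  | lit (l : L) : IsNegDisj (.lit l) [l]
  | orN {A B : Fm L} {la lb : List L} :
      IsNegDisj A la → IsNegDisj B lb → IsNegDisj (.orN A B) (la ++ lb)

/-- `C'` P-corresponds to the clause `C`. -/
def PCorr (neg : L → L) (P : Set L) (C' : Fm L) (C : Finset L) : Prop :=
  ∃ ls : List L, IsNegDisj C' ls ∧ (∀ l ∈ C, l ∈ ls) ∧ ∀ l ∈ ls, l ∉ C → neg l ∈ P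

/-- The LK(T)p sequent `Δ, C'_1, …, C'_m ⊢ [P]` corresponds to the LKDPLL(T)
sequent `Δ ⊢ C_1, …, C_m`: each `C'_i` P-corresponds to `C_i` and `Δ ⊨_T l` for
every `l ∈ P`. -/
def SeqCorr (neg : L → L) (sat : M → L → Prop) (P : Set L)
    (Δ : Finset L) (φ' : List (Fm L)) (φ : List (Finset L)) : Prop :=
  List.Forall₂ (PCorr neg P) φ' φ ∧ ∀ l ∈ P, entails sat Δ l

theorem PCorr.mono {α : Type} {neg : α → α} {P Q : Set α} (hPQ : P ⊆ Q) {C' : Fm α}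
    {C : Finset α} (h : PCorr neg P C' C) : PCorr neg Q C' C :=
  let ⟨ls, hls, hC, hextra⟩ := h
  ⟨ls, hls, hC, fun x hx hxC => hPQ (hextra x hx hxC)⟩

theorem PCorr.erase_of_insert {neg : L → L} {P : Set L} {C' : Fm L} {l : L} {C : Finset L}
    (h : PCorr neg P C' (insert l C)) : PCorr neg (insert (neg l) P) C' C := by
  obtain ⟨ls, hls, hC, hextra⟩ := h
  refine ⟨ls, hls, fun x hx => hC x (Finset.mem_insert_of_mem hx), fun x hx hxC => ?_⟩
  by_cases hxl : x = l
  · exact hxl ▸ Set.mem_insert _ _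
  · exact Set.mem_insert_of_mem _ (hextra x hx (by simp [hxl, hxC]))

theorem entails_neg_of_incon_insert {neg : L → L} {sat : M → L → Prop}
    (hneg : ∀ m l, ¬ sat m l → sat m (neg l)) {Δ : Finset L} {l : L}
    (hl : incon sat (insert l Δ)) : entails sat Δ (neg l) := fun m hm =>
  hneg m l fun hml => hl m fun x hx => (Finset.mem_insert.mp hx).elim (· ▸ hml) (hm x)

/-- Simulation of Resolve in LK(T)p: if `Δ, φ', C' ⊢ [P]` corresponds to
`Δ ⊢ φ, l∨C` and `Δ, l` is T-inconsistent, then the sequent `Δ, φ', C' ⊢ [P ∪ {¬l}]`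
obtained by one polarity-extension inference corresponds to `Δ ⊢ φ, C`. -/
theorem resolve_simulation (neg : L → L) (sat : M → L → Prop)
    (hneg : ∀ (m : M) (l : L), sat m (neg l) ↔ ¬ sat m l)
    (P : Set L) (Δ : Finset L) (C' : Fm L) (φ' : List (Fm L))
    (l : L) (C : Finset L) (φs : List (Finset L))
    (h : SeqCorr neg sat P Δ (C' :: φ') (insert l C :: φs))
    (hl : incon sat (insert l Δ)) :
    SeqCorr neg sat (insert (neg l) P) Δ (C' :: φ') (C :: φs) := by
  obtain ⟨hcorr, hP⟩ := h
  obtain ⟨hC, hφ⟩ := List.forall₂_cons.mp hcorr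
  have hnegl : entails sat Δ (neg l) :=
    entails_neg_of_incon_insert (fun m l => (hneg m l).mpr) hl
  refine ⟨List.Forall₂.cons hC.erase_of_insert
      (hφ.imp fun _ _ h => h.mono (Set.subset_insert _ _)), ?_⟩
  rintro x (rfl | hx)
  exacts [hnegl, hP x hx]
end
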